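/- arXiv:2508.17286 — 3 statements merged into one kernel-verified Lean document; each statement's English description precedes it below -/
import Mathlib

section
/- Let V: [0,T] → ℝ^{2n×2n} be the solution of the variational equation along a periodic orbit of a Hamiltonian system invariant under a linear anti-symplectic involution L, and suppose the orbit satisfies φ(T - t) = L φ(t) for all t. Then the monodromy matrix satisfies M = V(T) = L V(T/2)^{-1} L V(T/2). -/
/-!
Reversing time and conjugating by `L` maps solutions of `Ẋ = A(t) X` to solutions again:
since `A(T - t) = -L A(t) L` and `L² = 1`, `W(t) = L V(T - t)` satisfies `Ẇ = A(t) W`. By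
uniqueness for linear equations, `W(t) = V(t) W(0) = V(t) L V(T)`, and at `t = T/2` this reads
`L V(T/2) = V(T/2) L V(T)`. Uniqueness also makes every `V(t)` invertible, so
`V(T) = L V(T/2)⁻¹ L V(T/2)`.
-/

open Set

section LinearODE

variable {E : Type*} [NormedAddCommGroup E] [NormedSpace ℝ E]

theorem eq_of_hasDerivAt_clm_apply_of_eq {A : ℝ → E →L[ℝ] E} (hA : Continuous A)
    {f g : ℝ → E} (hf : ∀ t, HasDerivAt f (A t (f t)) t) (hg : ∀ t, HasDerivAt g (A t (g t)) t)
    {t₀ : ℝ} (heq : f t₀ = g t₀) : f = g := by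
  ext t
  obtain ⟨a, b, ht, ht₀⟩ : ∃ a b, t ∈ Ioo a b ∧ t₀ ∈ Ioo a b :=
    ⟨min t t₀ - 1, max t t₀ + 1, by constructor <;> constructor <;> grind⟩
  -- on a bounded time interval the field `x ↦ A s x` is uniformly Lipschitz
  obtain ⟨K, hK⟩ := (isCompact_Icc.image_of_continuousOn hA.nnnorm.continuousOn).bddAbove
  have hLip : ∀ s ∈ Ioo a b, LipschitzOnWith K (A s) univ := fun s hs =>
    ((A s).lipschitz.weaken (hK ⟨s, Ioo_subset_Icc_self hs, rfl⟩)).lipschitzOnWith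
  exact ODE_solution_unique_of_mem_Ioo hLip ht₀ (fun s _ => ⟨hf s, mem_univ _⟩)
    (fun s _ => ⟨hg s, mem_univ _⟩) heq ht

end LinearODE

attribute [local instance] Matrix.normedAddCommGroup Matrix.normedSpace

section MatrixODE

variable {m : Type*} [Fintype m] [DecidableEq m]

theorem HasDerivAt.matrix_const_mul (P : Matrix m m ℝ) {X : ℝ → Matrix m m ℝ}
    {X' : Matrix m m ℝ} {t : ℝ} (hX : HasDerivAt X X' t) :
    HasDerivAt (fun s => P * X s) (P * X') t :=
  (LinearMap.toContinuousLinearMap (LinearMap.mulLeft ℝ P)).hasFDerivAt.comp_hasDerivAt t hX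

theorem HasDerivAt.matrix_mul_const (P : Matrix m m ℝ) {X : ℝ → Matrix m m ℝ}
    {X' : Matrix m m ℝ} {t : ℝ} (hX : HasDerivAt X X' t) :
    HasDerivAt (fun s => X s * P) (X' * P) t :=
  (LinearMap.toContinuousLinearMap (LinearMap.mulRight ℝ P)).hasFDerivAt.comp_hasDerivAt t hX

variable {A V : ℝ → Matrix m m ℝ}

theorem Matrix.eq_of_hasDerivAt_mul_of_eq (hA : Continuous A) {X Y : ℝ → Matrix m m ℝ}
    (hX : ∀ t, HasDerivAt X (A t * X t) t) (hY : ∀ t, HasDerivAt Y (A t * Y t) t)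
    {t₀ : ℝ} (heq : X t₀ = Y t₀) : X = Y :=
  let mulLeftCLM : Matrix m m ℝ →ₗ[ℝ] Matrix m m ℝ →L[ℝ] Matrix m m ℝ :=
    LinearMap.toContinuousLinearMap.toLinearMap ∘ₗ LinearMap.mul ℝ (Matrix m m ℝ)
  eq_of_hasDerivAt_clm_apply_of_eq (A := fun t => mulLeftCLM (A t))
    (mulLeftCLM.continuous_of_finiteDimensional.comp hA) hX hY heq

theorem Matrix.hasDerivAt_mul_const_of_hasDerivAt_mul (hV : ∀ t, HasDerivAt V (A t * V t) t)
    (N : Matrix m m ℝ) (t : ℝ) : HasDerivAt (fun s => V s * N) (A t * (V t * N)) t := by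
  simpa only [Matrix.mul_assoc] using (hV t).matrix_mul_const N

theorem Matrix.hasDerivAt_mul_comp_const_sub {L : Matrix m m ℝ} {T : ℝ} (hL2 : L * L = 1)
    (hAsym : ∀ t, A (T - t) = -(L * A t * L)) (hV : ∀ t, HasDerivAt V (A t * V t) t) (t : ℝ) :
    HasDerivAt (fun s => L * V (T - s)) (A t * (L * V (T - t))) t := by
  have hrev : HasDerivAt (fun s => V (T - s)) ((-1 : ℝ) • (A (T - t) * V (T - t))) t :=
    (hV (T - t)).scomp t ((hasDerivAt_id t).const_sub T)
  convert hrev.matrix_const_mul L using 1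
  simp only [hAsym, neg_smul, one_smul, Matrix.neg_mul, neg_neg, Matrix.mul_assoc]
  rw [← Matrix.mul_assoc L L, hL2, Matrix.one_mul]

variable (hA : Continuous A) (hV : ∀ t, HasDerivAt V (A t * V t) t) (hV0 : V 0 = 1)
include hA hV hV0

theorem Matrix.eq_mul_apply_zero_of_hasDerivAt_mul {W : ℝ → Matrix m m ℝ}
    (hW : ∀ t, HasDerivAt W (A t * W t) t) (t : ℝ) : W t = V t * W 0 :=
  congrFun (Matrix.eq_of_hasDerivAt_mul_of_eq hA hW
    (Matrix.hasDerivAt_mul_const_of_hasDerivAt_mul hV (W 0)) (t₀ := 0) (by simp [hV0])) t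

theorem Matrix.isUnit_of_hasDerivAt_mul (t : ℝ) : IsUnit (V t) := by
  refine IsArtinianRing.isUnit_iff_isLeftRegular.mpr fun N₁ N₂ h => ?_
  simpa [hV0] using congrFun (Matrix.eq_of_hasDerivAt_mul_of_eq hA
    (Matrix.hasDerivAt_mul_const_of_hasDerivAt_mul hV N₁)
    (Matrix.hasDerivAt_mul_const_of_hasDerivAt_mul hV N₂) h) 0

end MatrixODE

theorem monodromy_simple_symmetric_general
    (n : ℕ) (T : ℝ)
    (L : Matrix (Fin n ⊕ Fin n) (Fin n ⊕ Fin n) ℝ)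
    (hL2 : L * L = 1)
    (A : ℝ → Matrix (Fin n ⊕ Fin n) (Fin n ⊕ Fin n) ℝ)
    (hAcont : ∀ i j, Continuous fun t => A t i j)
    (hAsym : ∀ t, A (T - t) = -(L * A t * L))
    (V : ℝ → Matrix (Fin n ⊕ Fin n) (Fin n ⊕ Fin n) ℝ)
    (hV0 : V 0 = 1)
    (hV : ∀ t i j, HasDerivAt (fun s => V s i j) ((A t * V t) i j) t) :
    V T = L * (V (T / 2))⁻¹ * L * V (T / 2) := by
  have hA : Continuous A := continuous_pi fun i => continuous_pi (hAcont i)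
  have hVA : ∀ t, HasDerivAt V (A t * V t) t := fun t =>
    hasDerivAt_pi.2 fun i => hasDerivAt_pi.2 (hV t i)
  have hhalf : L * V (T / 2) = V (T / 2) * (L * V T) := by
    simpa [sub_half] using Matrix.eq_mul_apply_zero_of_hasDerivAt_mul hA hVA hV0
      (Matrix.hasDerivAt_mul_comp_const_sub hL2 hAsym hVA) (T / 2)
  have hdet : IsUnit (V (T / 2)).det :=
    (Matrix.isUnit_iff_isUnit_det _).mp (Matrix.isUnit_of_hasDerivAt_mul hA hVA hV0 _)
  calc V T = L * (L * V T) := by rw [← Matrix.mul_assoc, hL2, Matrix.one_mul]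
    _ = L * ((V (T / 2))⁻¹ * (V (T / 2) * (L * V T))) := by
      rw [← Matrix.mul_assoc _ (V (T / 2)), Matrix.nonsing_inv_mul _ hdet, Matrix.one_mul]
    _ = L * (V (T / 2))⁻¹ * L * V (T / 2) := by rw [← hhalf]; simp only [Matrix.mul_assoc]

/-- Let `V` be the fundamental solution of the variational equation
`V̇ = A(t) V`, `V(0) = Id`, along a periodic orbit of a Hamiltonian system invariant
under a linear anti-symplectic involution `L`, where the orbit symmetry
`φ(T - t) = L φ(t)` yields `A(T - t) = -L A(t) L`.  Then the monodromy matrix satisfies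
`M = V(T) = L V(T/2)⁻¹ L V(T/2)`. -/
theorem monodromy_simple_symmetric
    (n : ℕ) (T : ℝ) (hT : 0 < T)
    (J L : Matrix (Fin n ⊕ Fin n) (Fin n ⊕ Fin n) ℝ)
    (hJ : J = Matrix.fromBlocks 0 1 (-1) 0)
    (hL2 : L * L = 1)
    (hLJ : L * J * L = -J)
    (A : ℝ → Matrix (Fin n ⊕ Fin n) (Fin n ⊕ Fin n) ℝ)
    (hAcont : ∀ i j, Continuous fun t => A t i j)
    (hAsym : ∀ t, A (T - t) = -(L * A t * L))
    (V : ℝ → Matrix (Fin n ⊕ Fin n) (Fin n ⊕ Fin n) ℝ)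
    (hV0 : V 0 = 1)
    (hV : ∀ t i j, HasDerivAt (fun s => V s i j) ((A t * V t) i j) t) :
    V T = L * (V (T / 2))⁻¹ * L * V (T / 2) :=
  monodromy_simple_symmetric_general n T L hL2 A hAcont hAsym V hV0 hV
end

section
/- For a doubly symmetric periodic orbit with respect to two commuting linear anti-symplectic involutions L_1, L_2 (with L_1 L_2 symplectic), satisfying φ(0) ∈ Fix(L_1) and φ(T/4) ∈ Fix(L_2), the monodromy matrix is M = [L_1 V(T/4)^{-1} L_2 V(T/4)]^2. -/
open Matrix

/-!
A reversing symmetry produces a second solution of the variational equation: if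
`A (e - t) = -(L * A t * L)` with `L * L = 1`, then `t ↦ L * V (e - t)` solves `W' = A W`, and so
does `t ↦ V t * (L * V e)`; they agree at `t = 0`, hence `V t * (L * V e) = L * V (e - t)`.
For `L₂`, `e = T / 2`, `t = T / 4` this gives `V (T / 2) = L₂ * V (T / 4)⁻¹ * L₂ * V (T / 4)`;
for `L₁`, `e = 0` it gives `V (-(T / 2)) = L₁ * V (T / 2) * L₁`; and for `L₂`, `t = -(T / 2)` it
gives `V T = L₂ * V (-(T / 2)) * L₂ * V (T / 2) = (L₁ * L₂ * V (T / 2)) ^ 2`.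
-/

section LinearMatrixODE

open scoped Matrix.Norms.Operator

variable {ι : Type*} [Fintype ι]

/-- The operator norm only makes `Matrix ι ι ℝ` a normed space; every norm induces the product
topology, so the notion does not depend on it. -/
def SolvesLinearODE (A W : ℝ → Matrix ι ι ℝ) : Prop :=
  ∀ t, HasDerivAt W (A t * W t) t

theorem solvesLinearODE_iff {A W : ℝ → Matrix ι ι ℝ} :
    SolvesLinearODE A W ↔ ∀ t i j, HasDerivAt (fun s => W s i j) ((A t * W t) i j) t :=
  forall_congr' fun _ => hasDerivAt_pi.trans <| forall_congr' fun _ => hasDerivAt_pi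

namespace SolvesLinearODE

variable {A W W₁ W₂ : ℝ → Matrix ι ι ℝ}

theorem eq_of_apply_eq (hA : Continuous A) (h₁ : SolvesLinearODE A W₁) (h₂ : SolvesLinearODE A W₂)
    {t₀ : ℝ} (h : W₁ t₀ = W₂ t₀) : W₁ = W₂ := by
  funext t
  obtain ⟨a, b, ht₀, ht⟩ : ∃ a b, t₀ ∈ Set.Ioo a b ∧ t ∈ Set.Ioo a b :=
    ⟨min t₀ t - 1, max t₀ t + 1, by grind, by grind⟩
  obtain ⟨C, hC⟩ := isCompact_Icc.exists_bound_of_continuousOn (s := Set.Icc a b) hA.continuousOn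
  have hlip : ∀ s ∈ Set.Ioo a b, LipschitzOnWith C.toNNReal (A s * ·) Set.univ := by
    refine fun s hs => (LipschitzWith.of_dist_le' fun X Y => ?_).lipschitzOnWith
    rw [dist_eq_norm, dist_eq_norm, ← Matrix.mul_sub]
    exact (linfty_opNorm_mul _ _).trans <|
      mul_le_mul_of_nonneg_right (hC s (Set.Ioo_subset_Icc_self hs)) (norm_nonneg _)
  exact ODE_solution_unique_of_mem_Ioo hlip ht₀ (fun s _ => ⟨h₁ s, trivial⟩)
    (fun s _ => ⟨h₂ s, trivial⟩) h ht

theorem zero : SolvesLinearODE A 0 := fun t =>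
  (hasDerivAt_const t (0 : Matrix ι ι ℝ)).congr_deriv (Matrix.mul_zero _).symm

variable [DecidableEq ι]

theorem mul_const (hW : SolvesLinearODE A W) (C : Matrix ι ι ℝ) :
    SolvesLinearODE A (W · * C) := fun t =>
  ((hW t).mul_const C).congr_deriv (Matrix.mul_assoc _ _ _)

theorem const_mul_comp_sub {L : Matrix ι ι ℝ} {e : ℝ} (hL : L * L = 1)
    (hAL : ∀ t, A (e - t) = -(L * A t * L)) (hW : SolvesLinearODE A W) :
    SolvesLinearODE A (fun t => L * W (e - t)) := fun t =>
  (((hW (e - t)).scomp t ((hasDerivAt_id t).const_sub e)).const_mul L).congr_deriv <| by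
  rw [hAL]
  simp only [neg_smul, one_smul, Matrix.neg_mul, neg_neg, ← Matrix.mul_assoc, hL,
    Matrix.one_mul]

theorem isUnit_det (hA : Continuous A) (hW : SolvesLinearODE A W) {t₀ : ℝ}
    (h₀ : IsUnit (W t₀).det) (t : ℝ) : IsUnit (W t).det := by
  rw [isUnit_iff_ne_zero] at h₀ ⊢
  intro ht
  obtain ⟨x, hx, hWx⟩ := exists_mulVec_eq_zero_iff.2 ht
  obtain ⟨j, -⟩ := Function.ne_iff.1 hx
  -- a kernel vector at time `t` spans a solution through `0`, so it lies in the kernel at `t₀`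
  have hcol : (W · * replicateCol ι x) = 0 :=
    (hW.mul_const _).eq_of_apply_eq hA zero (t₀ := t) (by simp [← replicateCol_mulVec, hWx])
  refine h₀ (exists_mulVec_eq_zero_iff.1 ⟨x, hx, funext fun i => ?_⟩)
  simpa [← replicateCol_mulVec] using congrFun (congrFun (congrFun hcol t₀) i) j

theorem mul_const_mul_eq_of_reversing (hA : Continuous A) (hW : SolvesLinearODE A W)
    (hW₀ : W 0 = 1) {L : Matrix ι ι ℝ} {e : ℝ} (hL : L * L = 1)
    (hAL : ∀ t, A (e - t) = -(L * A t * L)) (t : ℝ) :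
    W t * (L * W e) = L * W (e - t) :=
  congrFun ((hW.mul_const _).eq_of_apply_eq hA (hW.const_mul_comp_sub hL hAL) (t₀ := 0)
    (by simp [hW₀])) t

end SolvesLinearODE

end LinearMatrixODE

theorem monodromy_doubly_symmetric_general
    (n : ℕ) (T : ℝ)
    (L₁ L₂ : Matrix (Fin n ⊕ Fin n) (Fin n ⊕ Fin n) ℝ)
    (hL₁ : L₁ * L₁ = 1) (hL₂ : L₂ * L₂ = 1)
    (hcomm : L₁ * L₂ = L₂ * L₁)
    (A : ℝ → Matrix (Fin n ⊕ Fin n) (Fin n ⊕ Fin n) ℝ)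
    (hAcont : ∀ i j, Continuous fun t => A t i j)
    (hA₁ : ∀ t, A (-t) = -(L₁ * A t * L₁))
    (hA₂ : ∀ t, A (T / 2 - t) = -(L₂ * A t * L₂))
    (V : ℝ → Matrix (Fin n ⊕ Fin n) (Fin n ⊕ Fin n) ℝ)
    (hV0 : V 0 = 1)
    (hV : ∀ t i j, HasDerivAt (fun s => V s i j) ((A t * V t) i j) t) :
    V T = (L₁ * (V (T / 4))⁻¹ * L₂ * V (T / 4)) ^ 2 := by
  have hA : Continuous A := continuous_pi fun i => continuous_pi (hAcont i)
  have hsol : SolvesLinearODE A V := solvesLinearODE_iff.2 hV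
  have hrev₁ := hsol.mul_const_mul_eq_of_reversing hA hV0 hL₁ (e := 0) (by simpa using hA₁)
  have hrev₂ := hsol.mul_const_mul_eq_of_reversing hA hV0 hL₂ hA₂
  have hM : (V (T / 4))⁻¹ * V (T / 4) = 1 :=
    nonsing_inv_mul _ (hsol.isUnit_det hA (t₀ := 0) (by simp [hV0]) _)
  have hhalf : L₁ * (V (T / 4))⁻¹ * L₂ * V (T / 4) = L₁ * L₂ * V (T / 2) := by
    have h := hrev₂ (T / 4)
    rw [show T / 2 - T / 4 = T / 4 by ring] at h
    calc L₁ * (V (T / 4))⁻¹ * L₂ * V (T / 4)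
        = L₁ * ((V (T / 4))⁻¹ * V (T / 4) * (L₂ * V (T / 2))) := by
          rw [Matrix.mul_assoc _ (V (T / 4)), h]; simp only [Matrix.mul_assoc]
      _ = L₁ * L₂ * V (T / 2) := by rw [hM, Matrix.one_mul, Matrix.mul_assoc]
  have hfull : V T = (L₁ * L₂ * V (T / 2)) ^ 2 := by
    have h₁ := hrev₁ (T / 2)
    have h₂ := hrev₂ (-(T / 2))
    rw [hV0, Matrix.mul_one, zero_sub] at h₁
    rw [show T / 2 - -(T / 2) = T by ring] at h₂
    calc V T = L₂ * L₂ * V T := by rw [hL₂, Matrix.one_mul]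
      _ = L₂ * (L₁ * L₁ * V (-(T / 2))) * (L₂ * V (T / 2)) := by
          rw [hL₁, Matrix.one_mul, Matrix.mul_assoc L₂ L₂, ← h₂, Matrix.mul_assoc]
      _ = L₂ * L₁ * (V (T / 2) * L₁) * L₂ * V (T / 2) := by
          rw [Matrix.mul_assoc L₁ L₁, ← h₁]; simp only [Matrix.mul_assoc]
      _ = (L₁ * L₂ * V (T / 2)) ^ 2 := by rw [sq, ← hcomm]; simp only [Matrix.mul_assoc]
  rw [hhalf, hfull]

/-- For a doubly symmetric periodic orbit with respect to two commuting
linear anti-symplectic involutions `L₁, L₂` (with `L₁ L₂` symplectic), satisfying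
`φ(0) ∈ Fix(L₁)` (so `A(-t) = -L₁ A(t) L₁`) and `φ(T/4) ∈ Fix(L₂)` (so
`A(T/2 - t) = -L₂ A(t) L₂`), the monodromy matrix is
`M = V(T) = [L₁ V(T/4)⁻¹ L₂ V(T/4)]²`. -/
theorem monodromy_doubly_symmetric
    (n : ℕ) (T : ℝ) (hT : 0 < T)
    (J L₁ L₂ : Matrix (Fin n ⊕ Fin n) (Fin n ⊕ Fin n) ℝ)
    (hJ : J = Matrix.fromBlocks 0 1 (-1) 0)
    (hL₁ : L₁ * L₁ = 1) (hL₂ : L₂ * L₂ = 1)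
    (hcomm : L₁ * L₂ = L₂ * L₁)
    (hL₁J : L₁ * J * L₁ = -J) (hL₂J : L₂ * J * L₂ = -J)
    (hsymp : (L₁ * L₂)ᵀ * J * (L₁ * L₂) = J)
    (A : ℝ → Matrix (Fin n ⊕ Fin n) (Fin n ⊕ Fin n) ℝ)
    (hAcont : ∀ i j, Continuous fun t => A t i j)
    (hA₁ : ∀ t, A (-t) = -(L₁ * A t * L₁))
    (hA₂ : ∀ t, A (T / 2 - t) = -(L₂ * A t * L₂))
    (V : ℝ → Matrix (Fin n ⊕ Fin n) (Fin n ⊕ Fin n) ℝ)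
    (hV0 : V 0 = 1)
    (hV : ∀ t i j, HasDerivAt (fun s => V s i j) ((A t * V t) i j) t) :
    V T = (L₁ * (V (T / 4))⁻¹ * L₂ * V (T / 4)) ^ 2 :=
  monodromy_doubly_symmetric_general n T L₁ L₂ hL₁ hL₂ hcomm A hAcont hA₁ hA₂ V hV0 hV
end

section
/- Suppose a 4×4 symplectic matrix M can be written in block form M = [[A, B],[C, A^T]] with respect to a Lagrangian splitting, where B, C, AB, A^T C are symmetric 2×2 matrices and A^2 - BC = Id. Then λ is an eigenvalue of M if and only if (1/2)(λ + λ^{-1}) is an eigenvalue of A; conversely, if a is an eigenvalue of A then a + √(a^2 - 1) is an eigenvalue of M. -/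
open Polynomial Matrix

lemma charpoly_eval_eq {n : Type*} [DecidableEq n] [Fintype n]
    (N : Matrix n n ℂ) (z : ℂ) :
    N.charpoly.eval z = (z • (1 : Matrix n n ℂ) - N).det := by
  have h1 : N.charpoly.eval z = ((charmatrix N).map (Polynomial.evalRingHom z)).det := by
    rw [Matrix.charpoly, ← Polynomial.coe_evalRingHom, RingHom.map_det]; rfl
  rw [h1]
  congr 1
  ext i j
  by_cases h : i = j
  · subst h
    simp [charmatrix_apply_eq, Matrix.one_apply]
  · simp [charmatrix_apply_ne _ _ _ h, Matrix.one_apply, h]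

/-- For a 4×4 symplectic matrix in block form `M = [[A, B],[C, Aᵀ]]` with
respect to a Lagrangian splitting (with `B`, `C`, `AB`, `AᵀC` symmetric and
`A² - BC = Id`), `λ ≠ 0` is an eigenvalue of `M` iff `(λ + λ⁻¹)/2` is an eigenvalue of
`A`; conversely if `a` is an eigenvalue of `A`, then `a + √(a² - 1)` is an eigenvalue
of `M`. -/
theorem block_symplectic_spectrum
    (A B C : Matrix (Fin 2) (Fin 2) ℝ)
    (hB : Bᵀ = B) (hC : Cᵀ = C)
    (hAB : (A * B)ᵀ = A * B) (hAC : (Aᵀ * C)ᵀ = Aᵀ * C)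
    (hId : A * A - B * C = 1)
    (M : Matrix (Fin 2 ⊕ Fin 2) (Fin 2 ⊕ Fin 2) ℝ)
    (hM : M = Matrix.fromBlocks A B C Aᵀ) :
    (∀ l : ℂ, l ≠ 0 →
      (((M.map (algebraMap ℝ ℂ)).charpoly).IsRoot l ↔
        ((A.map (algebraMap ℝ ℂ)).charpoly).IsRoot ((l + l⁻¹) / 2))) ∧
    (∀ a : ℂ, ((A.map (algebraMap ℝ ℂ)).charpoly).IsRoot a →
      ((M.map (algebraMap ℝ ℂ)).charpoly).IsRoot (a + (a ^ 2 - 1) ^ ((1 : ℂ) / 2))) := by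
  -- real block algebra
  have e1 : B * Aᵀ = A * B := by
    calc B * Aᵀ = Bᵀ * Aᵀ := by rw [hB]
    _ = (A * B)ᵀ := (Matrix.transpose_mul A B).symm
    _ = A * B := hAB
  have e2 : C * A = Aᵀ * C := by
    calc C * A = Cᵀ * Aᵀᵀ := by rw [hC, Matrix.transpose_transpose]
    _ = (Aᵀ * C)ᵀ := (Matrix.transpose_mul _ _).symm
    _ = Aᵀ * C := hAC
  have e3 : Aᵀ * Aᵀ - C * B = 1 := by
    have h := congrArg Matrix.transpose hId
    simpa [Matrix.transpose_sub, Matrix.transpose_mul, hB, hC] using h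
  set M₀ : Matrix (Fin 2 ⊕ Fin 2) (Fin 2 ⊕ Fin 2) ℝ :=
    Matrix.fromBlocks A (-B) (-C) Aᵀ with hM₀
  set S : Matrix (Fin 2 ⊕ Fin 2) (Fin 2 ⊕ Fin 2) ℝ :=
    Matrix.fromBlocks 1 0 0 (-1) with hSdef
  have h1 : M * M₀ = 1 := by
    have b11 : A * A + B * -C = 1 := by rw [Matrix.mul_neg, ← sub_eq_add_neg, hId]
    have b12 : A * -B + B * Aᵀ = 0 := by rw [Matrix.mul_neg, e1, neg_add_cancel]
    have b21 : C * A + Aᵀ * -C = 0 := by rw [Matrix.mul_neg, e2, add_neg_cancel]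
    have b22 : C * -B + Aᵀ * Aᵀ = 1 := by rw [Matrix.mul_neg, neg_add_eq_sub, e3]
    rw [hM, hM₀, Matrix.fromBlocks_multiply, b11, b12, b21, b22, Matrix.fromBlocks_one]
  have h2 : M₀ * M = 1 := by
    have b11 : A * A + -B * C = 1 := by rw [Matrix.neg_mul, ← sub_eq_add_neg, hId]
    have b12 : A * B + -B * Aᵀ = 0 := by rw [Matrix.neg_mul, e1, add_neg_cancel]
    have b21 : -C * A + Aᵀ * C = 0 := by rw [Matrix.neg_mul, e2, neg_add_cancel]
    have b22 : -C * B + Aᵀ * Aᵀ = 1 := by rw [Matrix.neg_mul, neg_add_eq_sub, e3]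
    rw [hM, hM₀, Matrix.fromBlocks_multiply, b11, b12, b21, b22, Matrix.fromBlocks_one]
  have h3 : M + M₀ = Matrix.fromBlocks (A + A) 0 0 (Aᵀ + Aᵀ) := by
    rw [hM, hM₀, Matrix.fromBlocks_add, add_neg_cancel B, add_neg_cancel C]
  have hS : S * M * S = M₀ := by
    rw [hM, hM₀, hSdef, Matrix.fromBlocks_multiply, Matrix.fromBlocks_multiply]
    simp [Matrix.neg_mul, Matrix.mul_neg]
  have hSS : S * S = 1 := by
    rw [hSdef, Matrix.fromBlocks_multiply]
    simp [Matrix.neg_mul, Matrix.mul_neg, ← Matrix.fromBlocks_one]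
  -- complexify
  set f : ℝ →+* ℂ := algebraMap ℝ ℂ with hf
  set A' : Matrix (Fin 2) (Fin 2) ℂ := A.map f with hA'
  set P : Matrix (Fin 2 ⊕ Fin 2) (Fin 2 ⊕ Fin 2) ℂ := M.map f with hP
  set Q : Matrix (Fin 2 ⊕ Fin 2) (Fin 2 ⊕ Fin 2) ℂ := M₀.map f with hQ
  set T : Matrix (Fin 2 ⊕ Fin 2) (Fin 2 ⊕ Fin 2) ℂ := S.map f with hT
  have hmap : ∀ (X Y : Matrix (Fin 2 ⊕ Fin 2) (Fin 2 ⊕ Fin 2) ℝ),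
      (X * Y).map f = X.map f * Y.map f := fun X Y => Matrix.map_mul
  have h1' : P * Q = 1 := by
    rw [hP, hQ, ← hmap, h1, Matrix.map_one f (map_zero f) (map_one f)]
  have h2' : Q * P = 1 := by
    rw [hP, hQ, ← hmap, h2, Matrix.map_one f (map_zero f) (map_one f)]
  have h3' : P + Q = Matrix.fromBlocks (A' + A') 0 0 (A'ᵀ + A'ᵀ) := by
    rw [hP, hQ, ← Matrix.map_add f (fun a b => map_add f a b), h3,
      Matrix.fromBlocks_map,
      Matrix.map_add f (fun a b => map_add f a b) A A,
      Matrix.map_add f (fun a b => map_add f a b) Aᵀ Aᵀ,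
      Matrix.transpose_map, Matrix.map_zero f (map_zero f), ← hA']
  have hS' : T * P * T = Q := by
    rw [hP, hQ, hT, ← hmap, ← hmap, hS]
  have hSS' : T * T = 1 := by
    rw [hT, ← hmap, hSS, Matrix.map_one f (map_zero f) (map_one f)]
  have hdetT : T.det ^ 2 = 1 := by
    rw [sq, ← Matrix.det_mul, hSS', Matrix.det_one]
  have hdetPQ : P.det * Q.det = 1 := by rw [← Matrix.det_mul, h1', Matrix.det_one]
  have hdetP : P.det ≠ 0 := left_ne_zero_of_mul_eq_one hdetPQ
  have hdetQ : Q.det ≠ 0 := right_ne_zero_of_mul_eq_one hdetPQ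
  -- the two determinant functions
  set p : ℂ → ℂ := fun z => (z • (1 : Matrix (Fin 2 ⊕ Fin 2) (Fin 2 ⊕ Fin 2) ℂ) - P).det
    with hp
  set q : ℂ → ℂ := fun x => (x • (1 : Matrix (Fin 2) (Fin 2) ℂ) - A').det with hq
  have qT : ∀ x : ℂ, (x • (1 : Matrix (Fin 2) (Fin 2) ℂ) - A'ᵀ).det = q x := by
    intro x
    rw [hq, ← Matrix.det_transpose (x • 1 - A'ᵀ), Matrix.transpose_sub,
      Matrix.transpose_smul, Matrix.transpose_one, Matrix.transpose_transpose]
  -- Key identity G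
  have keyG : ∀ u : ℂ, u ≠ 0 →
      p u * p u⁻¹ = P.det * (16 * q ((u + u⁻¹) / 2) ^ 2) := by
    intro u hu
    set x : ℂ := (u + u⁻¹) / 2 with hx
    have blk : ∀ N : Matrix (Fin 2) (Fin 2) ℂ,
        N + N + -((u + u⁻¹) • (1 : Matrix (Fin 2) (Fin 2) ℂ)) = (-2 : ℂ) • (x • 1 - N) := by
      intro N
      ext i j
      by_cases h : i = j <;>
        simp [h, Matrix.one_apply, Matrix.add_apply, Matrix.sub_apply,
          Matrix.smul_apply, Matrix.neg_apply, hx] <;> ring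
    have hfact : (u • (1 : Matrix (Fin 2 ⊕ Fin 2) (Fin 2 ⊕ Fin 2) ℂ) - P) *
        (u⁻¹ • 1 - P) =
        P * (Matrix.fromBlocks ((-2 : ℂ) • (x • 1 - A')) 0 0
          ((-2 : ℂ) • (x • 1 - A'ᵀ))) := by
      have expand : (u • (1 : Matrix (Fin 2 ⊕ Fin 2) (Fin 2 ⊕ Fin 2) ℂ) - P) *
          (u⁻¹ • 1 - P) = 1 + P * P - (u + u⁻¹) • P := by
        rw [Matrix.sub_mul, Matrix.mul_sub, Matrix.mul_sub, Matrix.smul_mul,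
          Matrix.smul_mul, Matrix.mul_smul, Matrix.mul_smul, Matrix.one_mul,
          Matrix.mul_one, Matrix.one_mul, smul_smul, mul_inv_cancel₀ hu, one_smul,
          add_smul]
        abel
      have hPP : 1 + P * P = P * (P + Q) := by
        rw [Matrix.mul_add, h1', add_comm]
      have hsmulP : (u + u⁻¹) • P = P * ((u + u⁻¹) • 1) := by
        rw [Matrix.mul_smul, Matrix.mul_one]
      have hone : ((u + u⁻¹) • (1 : Matrix (Fin 2 ⊕ Fin 2) (Fin 2 ⊕ Fin 2) ℂ)) =
          Matrix.fromBlocks ((u + u⁻¹) • 1) 0 0 ((u + u⁻¹) • 1) := by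
        rw [← Matrix.fromBlocks_one, Matrix.fromBlocks_smul, smul_zero]
      rw [expand, hPP, hsmulP, ← Matrix.mul_sub, h3', hone, sub_eq_add_neg,
        Matrix.fromBlocks_neg, Matrix.fromBlocks_add, blk A', blk A'ᵀ]
      simp
    calc p u * p u⁻¹
        = ((u • (1 : Matrix (Fin 2 ⊕ Fin 2) (Fin 2 ⊕ Fin 2) ℂ) - P) *
          (u⁻¹ • 1 - P)).det := by simp only [hp]; rw [Matrix.det_mul]
      _ = (P * (Matrix.fromBlocks ((-2 : ℂ) • (x • 1 - A')) 0 0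
          ((-2 : ℂ) • (x • 1 - A'ᵀ)))).det := by rw [hfact]
      _ = P.det * ((-2 : ℂ) ^ Fintype.card (Fin 2) * (x • 1 - A').det *
          ((-2 : ℂ) ^ Fintype.card (Fin 2) * (x • 1 - A'ᵀ).det)) := by
          rw [Matrix.det_mul, Matrix.det_fromBlocks_zero₂₁, Matrix.det_smul,
            Matrix.det_smul, mul_assoc]
      _ = P.det * (16 * q x ^ 2) := by
          rw [qT]
          simp only [hq, Fintype.card_fin]
          ring
  -- symmetry between u and u⁻¹
  have keyc : ∀ u : ℂ, u ≠ 0 → Q.det * p u = u ^ 4 * p u⁻¹ := by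
    intro u hu
    have hrel : Q * (u • (1 : Matrix (Fin 2 ⊕ Fin 2) (Fin 2 ⊕ Fin 2) ℂ) - P) =
        (-u) • (u⁻¹ • 1 - Q) := by
      rw [Matrix.mul_sub, Matrix.mul_smul, Matrix.mul_one, h2', smul_sub,
        smul_smul, neg_mul, mul_inv_cancel₀ hu, neg_smul, one_smul, neg_smul,
        sub_neg_eq_add, neg_add_eq_sub]
    have hQconj : u⁻¹ • (1 : Matrix (Fin 2 ⊕ Fin 2) (Fin 2 ⊕ Fin 2) ℂ) - Q =
        T * (u⁻¹ • 1 - P) * T := by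
      rw [Matrix.mul_sub, Matrix.sub_mul, Matrix.mul_smul, Matrix.mul_one,
        Matrix.smul_mul, hSS', hS']
    have hdet := congrArg Matrix.det hrel
    rw [Matrix.det_mul, hQconj, Matrix.det_smul, Matrix.det_mul, Matrix.det_mul] at hdet
    have hcard : ((-u) ^ Fintype.card (Fin 2 ⊕ Fin 2)) = u ^ 4 := by
      simp only [Fintype.card_sum, Fintype.card_fin]
      ring
    rw [hcard] at hdet
    calc Q.det * p u
        = Q.det * (u • (1 : Matrix (Fin 2 ⊕ Fin 2) (Fin 2 ⊕ Fin 2) ℂ) - P).det := by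
          simp only [hp]
      _ = u ^ 4 * (T.det * (u⁻¹ • 1 - P).det * T.det) := hdet
      _ = u ^ 4 * (T.det ^ 2 * p u⁻¹) := by simp only [hp]; ring
      _ = u ^ 4 * p u⁻¹ := by rw [hdetT, one_mul]
  -- combined equivalence
  have main : ∀ u : ℂ, u ≠ 0 → (p u = 0 ↔ q ((u + u⁻¹) / 2) = 0) := by
    intro u hu
    have hG := keyG u hu
    have hc := keyc u hu
    have hcomb : Q.det * (p u * p u) = u ^ 4 * (P.det * (16 * q ((u + u⁻¹) / 2) ^ 2)) := by
      calc Q.det * (p u * p u) = p u * (Q.det * p u) := by ring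
      _ = p u * (u ^ 4 * p u⁻¹) := by rw [hc]
      _ = u ^ 4 * (p u * p u⁻¹) := by ring
      _ = u ^ 4 * (P.det * (16 * q ((u + u⁻¹) / 2) ^ 2)) := by rw [hG]
    constructor
    · intro h0
      have hz : u ^ 4 * (P.det * (16 * q ((u + u⁻¹) / 2) ^ 2)) = 0 := by
        rw [← hcomb, h0]; ring
      rcases mul_eq_zero.mp hz with h | h
      · exact absurd h (pow_ne_zero 4 hu)
      · rcases mul_eq_zero.mp h with h | h
        · exact absurd h hdetP
        · rcases mul_eq_zero.mp h with h | h
          · norm_num at h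
          · exact pow_eq_zero_iff (two_ne_zero) |>.mp h
    · intro h0
      have hz : Q.det * (p u * p u) = 0 := by rw [hcomb, h0]; ring
      rcases mul_eq_zero.mp hz with h | h
      · exact absurd h hdetQ
      · rcases mul_eq_zero.mp h with h' | h' <;> exact h'
  -- translate to charpoly roots
  have rootP : ∀ z : ℂ, (P.charpoly.IsRoot z ↔ p z = 0) := by
    intro z
    rw [Polynomial.IsRoot, charpoly_eval_eq]
  have rootA : ∀ z : ℂ, (A'.charpoly.IsRoot z ↔ q z = 0) := by
    intro z
    rw [Polynomial.IsRoot, charpoly_eval_eq]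
  constructor
  · intro l hl
    rw [rootP l, rootA ((l + l⁻¹) / 2)]
    exact main l hl
  · intro a ha
    rw [rootA a] at ha
    set s : ℂ := (a ^ 2 - 1) ^ ((1 : ℂ) / 2) with hs
    have hs2 : s ^ 2 = a ^ 2 - 1 := by
      by_cases h : a ^ 2 - 1 = 0
      · rw [hs, h, Complex.zero_cpow (by norm_num : (1 : ℂ) / 2 ≠ 0)]
        norm_num
      · rw [hs, sq, ← Complex.cpow_add _ _ h]
        norm_num
    have hmul : (a + s) * (a - s) = 1 := by linear_combination -hs2
    have hne : a + s ≠ 0 := left_ne_zero_of_mul_eq_one hmul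
    have hinv : (a + s)⁻¹ = a - s := inv_eq_of_mul_eq_one_right hmul
    have hxeq : ((a + s) + (a + s)⁻¹) / 2 = a := by rw [hinv]; ring
    rw [rootP (a + s)]
    exact (main (a + s) hne).mpr (by rw [hxeq]; exact ha)
end
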